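/- arXiv:math-ph/0403031 — 4 statements merged into one kernel-verified Lean document; each statement's English description precedes it below -/
import Mathlib

section
/- Quartic Wronskian identity: Let V(x,λ) be a 2×2 matrix-valued function, and suppose column vectors g⁺(x), f⁺(x) satisfy g⁺' = V(x,μ)g⁺, f⁺' = V(x,λ)f⁺, while row vectors g⁻(x), f⁻(x) satisfy g⁻' = -g⁻V(x,μ), f⁻' = -f⁻V(x,λ), where V(x,λ) = -(iλ/2)σ₃ + Y₀(x) with Y₀ off-diagonal (independent of λ). Then f₂⁺f₁⁻g₁⁺g₂⁻ - f₁⁺f₂⁻g₂⁺g₁⁻ = (1/(i(λ-μ))) d/dx [(f⁻ I g⁺)(g⁻ I f⁺)], where I is the 2×2 identity matrix (so f⁻Ig⁺ is the scalar product f₁⁻g₁⁺ + f₂⁻g₂⁺). -/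
open scoped Matrix BigOperators

/-- Quartic Wronskian identity (Lemma 3.1): if the column vectors
`g⁺, f⁺` solve `g⁺' = V(x,μ)g⁺`, `f⁺' = V(x,λ)f⁺` and the row vectors
`g⁻, f⁻` solve `g⁻' = -g⁻V(x,μ)`, `f⁻' = -f⁻V(x,λ)`, where
`V(x,λ) = -(iλ/2)σ₃ + Y₀(x)` with `Y₀` off-diagonal, then
`f₂⁺f₁⁻g₁⁺g₂⁻ - f₁⁺f₂⁻g₂⁺g₁⁻ = (1/(i(λ-μ))) d/dx [(f⁻Ig⁺)(g⁻If⁺)]`,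
i.e. `d/dx [(f⁻Ig⁺)(g⁻If⁺)] = i(λ-μ)(f₂⁺f₁⁻g₁⁺g₂⁻ - f₁⁺f₂⁻g₂⁺g₁⁻)`. -/
theorem stmt_5 (lam mu : ℂ) (hlm : lam ≠ mu)
    (Y₀ : ℝ → Matrix (Fin 2) (Fin 2) ℂ)
    (hY : ∀ x, Y₀ x 0 0 = 0 ∧ Y₀ x 1 1 = 0)
    (V : ℂ → ℝ → Matrix (Fin 2) (Fin 2) ℂ)
    (hV : ∀ z x, V z x = (-(Complex.I * z / 2)) • (!![1, 0; 0, -1] : Matrix (Fin 2) (Fin 2) ℂ) + Y₀ x)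
    (fp gp : ℝ → Fin 2 → ℂ) (fm gm : ℝ → Fin 2 → ℂ)
    (hfp : ∀ x i, HasDerivAt (fun t => fp t i) (∑ j, V lam x i j * fp x j) x)
    (hgp : ∀ x i, HasDerivAt (fun t => gp t i) (∑ j, V mu x i j * gp x j) x)
    (hfm : ∀ x j, HasDerivAt (fun t => fm t j) (-∑ i, fm x i * V lam x i j) x)
    (hgm : ∀ x j, HasDerivAt (fun t => gm t j) (-∑ i, gm x i * V mu x i j) x) :
    ∀ x, HasDerivAt
      (fun t => (∑ i, fm t i * gp t i) * (∑ i, gm t i * fp t i))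
      (Complex.I * (lam - mu) *
        (fp x 1 * fm x 0 * gp x 0 * gm x 1 - fp x 0 * fm x 1 * gp x 1 * gm x 0)) x := by
  intro x
  have h00 := (hY x).1
  have h11 := (hY x).2
  have ev : ∀ z, V z x 0 0 = -(Complex.I * z / 2) ∧ V z x 1 1 = Complex.I * z / 2 ∧
      V z x 0 1 = Y₀ x 0 1 ∧ V z x 1 0 = Y₀ x 1 0 := by
    intro z
    rw [hV]
    refine ⟨?_, ?_, ?_, ?_⟩ <;>
      simp [Matrix.add_apply, Matrix.smul_apply, h00, h11] <;> ring
  obtain ⟨el00, el11, el01, el10⟩ := ev lam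
  obtain ⟨em00, em11, em01, em10⟩ := ev mu
  have hA := (((hfm x 0).mul (hgp x 0)).add ((hfm x 1).mul (hgp x 1)))
  have hB := (((hgm x 0).mul (hfp x 0)).add ((hgm x 1).mul (hfp x 1)))
  have key := hA.mul hB
  simp only [Fin.sum_univ_two] at key ⊢
  refine key.congr_deriv ?_
  simp only [Pi.add_apply, Pi.mul_apply]
  rw [el00, el11, el01, el10, em00, em11, em01, em10]
  ring
end

section
/- Invariance of the Atiyah–Hitchin bracket under linear fractional transformations: Suppose X(λ), X(μ) are elements of a Poisson algebra satisfying {X(λ), X(μ)} = (X(λ)-X(μ))²/(λ-μ). Define X̃(λ) = (dX(λ)+b)/(cX(λ)+a) for constants a,b,c,d with ad-bc = 1 (and cX(λ)+a, cX(μ)+a invertible/nonzero). Then {X̃(λ), X̃(μ)} = (X̃(λ)-X̃(μ))²/(λ-μ). -/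
/-- Invariance of the Atiyah–Hitchin bracket under linear fractional
transformations: in a commutative Poisson algebra over ℂ, if
`{X(λ), X(μ)} = (X(λ)-X(μ))²/(λ-μ)`, `a,b,c,d ∈ ℂ` with `ad - bc = 1`, and
`X̃ = (dX+b)(cX+a)⁻¹`, then `{X̃(λ), X̃(μ)} = (X̃(λ)-X̃(μ))²/(λ-μ)`. -/
theorem stmt_6 {A : Type*} [CommRing A] [Algebra ℂ A]
    (br : A →ₗ[ℂ] A →ₗ[ℂ] A)
    (hskew : ∀ x y, br x y = -br y x)
    (hleib : ∀ x y z, br (x * y) z = x * br y z + y * br x z)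
    (hcas : ∀ (r : ℂ) (x : A), br (algebraMap ℂ A r) x = 0)
    (lam mu : ℂ) (hlm : lam ≠ mu)
    (Xl Xm : A)
    (hAH : br Xl Xm = algebraMap ℂ A (lam - mu)⁻¹ * (Xl - Xm) ^ 2)
    (a b c d : ℂ) (hdet : a * d - b * c = 1)
    (ul um : A)
    (hul : (algebraMap ℂ A c * Xl + algebraMap ℂ A a) * ul = 1)
    (hum : (algebraMap ℂ A c * Xm + algebraMap ℂ A a) * um = 1) :
    br ((algebraMap ℂ A d * Xl + algebraMap ℂ A b) * ul)
       ((algebraMap ℂ A d * Xm + algebraMap ℂ A b) * um)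
      = algebraMap ℂ A (lam - mu)⁻¹ *
          ((algebraMap ℂ A d * Xl + algebraMap ℂ A b) * ul -
           (algebraMap ℂ A d * Xm + algebraMap ℂ A b) * um) ^ 2 := by
  set aA := algebraMap ℂ A a with haA
  set bA := algebraMap ℂ A b with hbA
  set cA := algebraMap ℂ A c with hcA
  set dA := algebraMap ℂ A d with hdA
  set K := algebraMap ℂ A (lam - mu)⁻¹ with hK
  have hdetA : aA * dA - bA * cA = 1 := by
    rw [haA, hbA, hcA, hdA, ← map_mul, ← map_mul, ← map_sub, hdet, map_one]
  have hbr1 : ∀ y : A, br 1 y = 0 := by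
    intro y
    have h := hcas 1 y
    simpa using h
  have hcas2 : ∀ (r : ℂ) (x : A), br x (algebraMap ℂ A r) = 0 := by
    intro r x; rw [hskew, hcas, neg_zero]
  have hleib2 : ∀ x y z : A, br x (y * z) = y * br x z + z * br x y := by
    intro x y z
    rw [hskew, hleib, hskew z x, hskew y x]; ring
  have hsc : ∀ (p q : ℂ) (x z : A),
      br (algebraMap ℂ A p * x + algebraMap ℂ A q) z = algebraMap ℂ A p * br x z := by
    intro p q x z
    rw [map_add, LinearMap.add_apply, hleib, hcas, hcas]; ring
  have hsc2 : ∀ (p q : ℂ) (x z : A),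
      br z (algebraMap ℂ A p * x + algebraMap ℂ A q) = algebraMap ℂ A p * br z x := by
    intro p q x z
    rw [hskew, hsc, hskew x z]; ring
  -- inverse derivation lemmas
  have hinvl : ∀ z : A, br ul z = -(ul * ul) * br (cA * Xl + aA) z := by
    intro z
    have h0 : (cA * Xl + aA) * br ul z + ul * br (cA * Xl + aA) z = 0 := by
      rw [← hleib, hul, hbr1]
    linear_combination ul * h0 - br ul z * hul
  have hinvm : ∀ z : A, br um z = -(um * um) * br (cA * Xm + aA) z := by
    intro z
    have h0 : (cA * Xm + aA) * br um z + um * br (cA * Xm + aA) z = 0 := by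
      rw [← hleib, hum, hbr1]
    linear_combination um * h0 - br um z * hum
  -- the four basic brackets
  have b4 : br (dA * Xl + bA) (dA * Xm + bA) = dA * (dA * br Xl Xm) := by
    rw [hsc, hsc2]
  have b2 : br ul (dA * Xm + bA) = -(ul * ul) * (cA * (dA * br Xl Xm)) := by
    rw [hinvl, hsc, hsc2]
  have b3 : br (dA * Xl + bA) um = -(um * um) * (dA * (cA * br Xl Xm)) := by
    rw [hskew, hinvm, hsc, hsc2, hskew Xm Xl]
    ring
  have b1 : br ul um = (ul * ul) * ((um * um) * (cA * (cA * br Xl Xm))) := by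
    rw [hinvl, hskew (cA * Xl + aA) um, hinvm, hsc, hsc2, hskew Xm Xl]
    ring
  -- key reductions
  have f1 : cA * ((dA * Xl + bA) * ul) - dA = -ul := by
    linear_combination dA * hul - ul * hdetA
  have f2 : cA * ((dA * Xm + bA) * um) - dA = -um := by
    linear_combination dA * hum - um * hdetA
  have e2 : (dA * Xl + bA) * ul - (dA * Xm + bA) * um = ul * um * (Xl - Xm) := by
    linear_combination (-((dA * Xl + bA) * ul)) * hum + ((dA * Xm + bA) * um) * hul
      + (ul * um * (Xl - Xm)) * hdetA
  calc br ((dA * Xl + bA) * ul) ((dA * Xm + bA) * um)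
      = (dA * Xl + bA) * br ul ((dA * Xm + bA) * um)
        + ul * br (dA * Xl + bA) ((dA * Xm + bA) * um) := by rw [hleib]
    _ = (dA * Xl + bA) * ((dA * Xm + bA) * br ul um + um * br ul (dA * Xm + bA))
        + ul * ((dA * Xm + bA) * br (dA * Xl + bA) um
          + um * br (dA * Xl + bA) (dA * Xm + bA)) := by rw [hleib2, hleib2]
    _ = K * (Xl - Xm) ^ 2 * (ul * um) *
          ((cA * ((dA * Xl + bA) * ul) - dA) * (cA * ((dA * Xm + bA) * um) - dA)) := by
        rw [b1, b2, b3, b4, hAH]; ring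
    _ = K * (Xl - Xm) ^ 2 * (ul * um) * (-ul * -um) := by rw [f1, f2]
    _ = K * (ul * um * (Xl - Xm)) ^ 2 := by ring
    _ = K * ((dA * Xl + bA) * ul - (dA * Xm + bA) * um) ^ 2 := by rw [e2]
end

section
/- Invariance of the deformed Atiyah–Hitchin bracket under linear fractional transformations: Suppose X(Q), X(P) are elements of a Poisson algebra satisfying {X(Q), X(P)} = -2 · (X(Q)-X(P))²/(λ-μ) · (Ω(Q)+Ω(P))/2, where λ, μ, Ω(Q), Ω(P) are constants (Casimirs). Define X̃ = (dX+b)/(cX+a) with ad-bc=1 and cX(Q)+a, cX(P)+a invertible. Then {X̃(Q), X̃(P)} = -2 · (X̃(Q)-X̃(P))²/(λ-μ) · (Ω(Q)+Ω(P))/2. -/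
/-- Invariance of the deformed Atiyah–Hitchin bracket under linear fractional
transformations: if `{X(Q), X(P)} = -2 (X(Q)-X(P))²/(λ-μ) · (Ω(Q)+Ω(P))/2`
with `λ, μ, Ω(Q), Ω(P)` constants and `X̃ = (dX+b)(cX+a)⁻¹`, `ad - bc = 1`,
then `{X̃(Q), X̃(P)} = -2 (X̃(Q)-X̃(P))²/(λ-μ) · (Ω(Q)+Ω(P))/2`. -/
theorem stmt_7 {A : Type*} [CommRing A] [Algebra ℂ A]
    (br : A →ₗ[ℂ] A →ₗ[ℂ] A)
    (hskew : ∀ x y, br x y = -br y x)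
    (hleib : ∀ x y z, br (x * y) z = x * br y z + y * br x z)
    (hcas : ∀ (r : ℂ) (x : A), br (algebraMap ℂ A r) x = 0)
    (lam mu ΩQ ΩP : ℂ) (hlm : lam ≠ mu)
    (XQ XP : A)
    (hdAH : br XQ XP
      = algebraMap ℂ A (-2 * (lam - mu)⁻¹ * ((ΩQ + ΩP) / 2)) * (XQ - XP) ^ 2)
    (a b c d : ℂ) (hdet : a * d - b * c = 1)
    (uQ uP : A)
    (huQ : (algebraMap ℂ A c * XQ + algebraMap ℂ A a) * uQ = 1)
    (huP : (algebraMap ℂ A c * XP + algebraMap ℂ A a) * uP = 1) :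
    br ((algebraMap ℂ A d * XQ + algebraMap ℂ A b) * uQ)
       ((algebraMap ℂ A d * XP + algebraMap ℂ A b) * uP)
      = algebraMap ℂ A (-2 * (lam - mu)⁻¹ * ((ΩQ + ΩP) / 2)) *
          ((algebraMap ℂ A d * XQ + algebraMap ℂ A b) * uQ -
           (algebraMap ℂ A d * XP + algebraMap ℂ A b) * uP) ^ 2 := by

  set φ := algebraMap ℂ A with hφ
  have hdet' : φ a * φ d - φ b * φ c = 1 := by
    rw [← map_mul, ← map_mul, ← map_sub, hdet, map_one]
  -- linearity lemmas
  have hadd1 : ∀ x y z : A, br (x + y) z = br x z + br y z := by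
    intro x y z; rw [map_add]; rfl
  have hsmul1 : ∀ (r : ℂ) (x y : A), br (φ r * x) y = φ r * br x y := by
    intro r x y
    rw [← Algebra.smul_def, map_smul, LinearMap.smul_apply, Algebra.smul_def]
  -- affine derivative in first slot
  have haff : ∀ (r s : ℂ) (x y : A), br (φ r * x + φ s) y = φ r * br x y := by
    intro r s x y
    rw [hadd1, hsmul1, hcas, add_zero]
  -- bracket with inverse
  have hu : ∀ (X u : A), (φ c * X + φ a) * u = 1 →
      ∀ y, br u y = -(u ^ 2 * (φ c * br X y)) := by
    intro X u hXu y
    have h0 := hleib (φ c * X + φ a) u y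
    rw [hXu, haff] at h0
    have h1 : br (1 : A) y = 0 := by
      rw [show (1 : A) = φ 1 from (map_one φ).symm, hcas]
    rw [h1] at h0
    have h2 := congrArg (fun t => u * t) h0
    simp only [mul_zero] at h2
    -- h2 : 0 = u * ((φ c * X + φ a) * br u y + u * (φ c * br X y))
    linear_combination -h2 - br u y * hXu
  have huQ' := hu XQ uQ huQ
  have huP' := hu XP uP huP
  -- bracket of the transformed variable in the first slot
  have hkey : ∀ (X u : A), (φ c * X + φ a) * u = 1 →
      ∀ y, br ((φ d * X + φ b) * u) y = u ^ 2 * br X y := by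
    intro X u hXu y
    rw [hleib, hu X u hXu, haff]
    -- goal: (φ d * X + φ b) * -(u^2 * (φ c * br X y)) + u * (φ d * br X y) = u^2 * br X y
    linear_combination -(u * φ d * br X y) * hXu + (u ^ 2 * br X y) * hdet'
  -- difference identity
  have hdiff : (φ d * XQ + φ b) * uQ - (φ d * XP + φ b) * uP
      = uQ * uP * (XQ - XP) := by
    linear_combination -((φ d * XQ + φ b) * uQ) * huP
      + ((φ d * XP + φ b) * uP) * huQ + (uQ * uP * (XQ - XP)) * hdet'
  have h2 : br ((φ d * XQ + φ b) * uQ) ((φ d * XP + φ b) * uP)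
      = uQ ^ 2 * uP ^ 2 * br XQ XP := by
    rw [hkey XQ uQ huQ]
    rw [hskew, hkey XP uP huP, hskew XP XQ]
    ring
  rw [h2, hdAH, hdiff]
  ring
end

section
/- Suppose in a Poisson algebra the entries of a matrix-valued object satisfy the Sklyanin-type relations of Lemma 3.2 (e.g. {m₁₁(λ), m₁₂(μ)} = K(m₁₂(λ)m₁₁(μ) - m₁₂(μ)m₁₁(λ))/(λ-μ), and all brackets {m₁₁(λ),m₁₁(μ)}, {m₁₂(λ),m₁₂(μ)}, etc. vanish as stated). Then the trace-type combination Δ(λ) = (m₁₁(λ)+m₂₂(λ))/2 satisfies {Δ(λ), Δ(μ)} = 0. -/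
/-- If the entries `m_{ij}(λ)` of the transition matrix satisfy the
Sklyanin-type relations of Lemma 3.2 (six nontrivial brackets with constant
`K`, all other brackets vanishing), then the discriminant-type combination
`Δ(λ) = (m₁₁(λ)+m₂₂(λ))/2` satisfies `{Δ(λ), Δ(μ)} = 0`. -/
theorem stmt_19 {A : Type*} [CommRing A] [Algebra ℂ A]
    (br : A →ₗ[ℂ] A →ₗ[ℂ] A)
    (hskew : ∀ x y, br x y = -br y x)
    (K : ℂ)
    (m11 m12 m21 m22 : ℂ → A)
    (h1 : ∀ l m : ℂ, l ≠ m → br (m11 l) (m12 m)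
      = (K * (l - m)⁻¹) • (m12 l * m11 m - m12 m * m11 l))
    (h2 : ∀ l m : ℂ, l ≠ m → br (m11 l) (m21 m)
      = (K * (l - m)⁻¹) • (m11 l * m21 m - m11 m * m21 l))
    (h3 : ∀ l m : ℂ, l ≠ m → br (m11 l) (m22 m)
      = (K * (l - m)⁻¹) • (m12 l * m21 m - m12 m * m21 l))
    (h4 : ∀ l m : ℂ, l ≠ m → br (m12 l) (m21 m)
      = (K * (l - m)⁻¹) • (m11 l * m22 m - m11 m * m22 l))
    (h5 : ∀ l m : ℂ, l ≠ m → br (m12 l) (m22 m)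
      = (K * (l - m)⁻¹) • (m12 l * m22 m - m12 m * m22 l))
    (h6 : ∀ l m : ℂ, l ≠ m → br (m21 l) (m22 m)
      = (K * (l - m)⁻¹) • (m22 l * m21 m - m22 m * m21 l))
    (h11 : ∀ l m : ℂ, br (m11 l) (m11 m) = 0)
    (h1212 : ∀ l m : ℂ, br (m12 l) (m12 m) = 0)
    (h2121 : ∀ l m : ℂ, br (m21 l) (m21 m) = 0)
    (h2222 : ∀ l m : ℂ, br (m22 l) (m22 m) = 0) :
    ∀ l m : ℂ, l ≠ m →
      br ((1 / 2 : ℂ) • (m11 l + m22 l)) ((1 / 2 : ℂ) • (m11 m + m22 m)) = 0 := by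
  intro l m hlm
  have hml : m ≠ l := hlm.symm
  have h2211 : br (m22 l) (m11 m) = (K * (m - l)⁻¹) •
      (m12 l * m21 m - m12 m * m21 l) := by
    rw [hskew, h3 m l hml, ← smul_neg, neg_sub]
  have hinv : (m - l)⁻¹ = -(l - m)⁻¹ := by rw [← inv_neg, neg_sub]
  simp only [map_smul, map_add, LinearMap.smul_apply, LinearMap.add_apply,
    h11, h2222, h3 l m hlm, h2211, hinv]
  module
end
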